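/- arXiv:2005.04873 — 2 statements merged into one kernel-verified Lean document; each statement's English description precedes it below -/
import Mathlib

section
/- Let X be a separable Banach space over 𝕂, let (z_k) be a sequence in X, and let 𝓕 be a filter on ℕ which, viewed as a set of subsets of ℕ identified with indicator functions in the Cantor space {0,1}^ℕ (product topology), is a Borel subset of the Cantor space. Then the set Y = {((a_k)_{k=1}^∞, z) ∈ 𝕂^ℕ × X : the partial sums Σ_{k=1}^n a_k z_k converge to z along 𝓕} is a Borel subset of 𝕂^ℕ × X (with the product topology on 𝕂^ℕ). -/
open Filter Finset MeasureTheory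

/-- For a separable Banach space `X`, a sequence `z` in `X` and a filter `𝓕` on `ℕ`
which is Borel as a subset of the Cantor space `{0,1}^ℕ`, the set of pairs
`((aₖ), z₀)` such that the partial sums `∑_{k≤n} aₖ zₖ` converge to `z₀` along `𝓕`
is a Borel subset of `𝕂^ℕ × X`. -/
theorem fconvergence_set_borel
    {𝕂 X : Type*} [RCLike 𝕂] [NormedAddCommGroup X] [NormedSpace 𝕂 X] [CompleteSpace X]
    [TopologicalSpace.SeparableSpace X]
    (z : ℕ → X) (𝓕 : Filter ℕ)
    (hBorel : MeasurableSet[borel (ℕ → Bool)] {f : ℕ → Bool | {n : ℕ | f n = true} ∈ 𝓕}) :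
    MeasurableSet[borel ((ℕ → 𝕂) × X)]
      {p : (ℕ → 𝕂) × X | ∀ ε : ℝ, 0 < ε →
        {n : ℕ | ‖(∑ k ∈ Finset.range n, p.1 k • z k) - p.2‖ < ε} ∈ 𝓕} := by
  haveI : SecondCountableTopology X := UniformSpace.secondCountable_of_separable X
  borelize 𝕂 X Bool
  rw [(BorelSpace.measurable_eq (α := (ℕ → 𝕂) × X)).symm]
  rw [← BorelSpace.measurable_eq (α := ℕ → Bool)] at hBorel
  have key : {p : (ℕ → 𝕂) × X | ∀ ε : ℝ, 0 < ε →
        {n : ℕ | ‖(∑ k ∈ Finset.range n, p.1 k • z k) - p.2‖ < ε} ∈ 𝓕} =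
      ⋂ (q : ℚ) (_ : 0 < q), (fun p : (ℕ → 𝕂) × X => fun n : ℕ =>
        decide (‖(∑ k ∈ Finset.range n, p.1 k • z k) - p.2‖ < (q : ℝ))) ⁻¹'
        {f : ℕ → Bool | {n : ℕ | f n = true} ∈ 𝓕} := by
    ext p
    simp only [Set.mem_setOf_eq, Set.mem_iInter, Set.mem_preimage, decide_eq_true_eq]
    constructor
    · intro h q hq; exact h q (by exact_mod_cast hq)
    · intro h ε hε
      obtain ⟨q, hq0, hqε⟩ := exists_rat_btwn hε
      exact 𝓕.sets_of_superset (h q (by exact_mod_cast hq0)) fun n hn => lt_trans hn hqε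
  rw [key]
  refine MeasurableSet.iInter fun q => MeasurableSet.iInter fun hq => ?_
  have hmeas : Measurable fun p : (ℕ → 𝕂) × X => fun n : ℕ =>
      decide (‖(∑ k ∈ Finset.range n, p.1 k • z k) - p.2‖ < (q : ℝ)) := by
    refine measurable_pi_iff.mpr fun n => ?_
    have hopen : IsOpen {p : (ℕ → 𝕂) × X |
        ‖(∑ k ∈ Finset.range n, p.1 k • z k) - p.2‖ < (q : ℝ)} := by
      have hc : Continuous fun p : (ℕ → 𝕂) × X =>
          ‖(∑ k ∈ Finset.range n, p.1 k • z k) - p.2‖ := by fun_prop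
      exact isOpen_lt hc continuous_const
    refine measurable_to_countable' fun x => ?_
    cases x with
    | false =>
      convert hopen.measurableSet.compl using 1
      ext p; simp
    | true =>
      convert hopen.measurableSet using 1
      ext p; simp
  exact hmeas hBorel
end

section
/- (Banach–Mazur theorem) Every separable real Banach space X admits a linear isometric embedding into the Banach space C(Δ) of continuous real-valued functions on the Cantor set Δ = {0,1}^ℕ, equipped with the supremum norm. -/
/-!
The closed unit ball `B` of the dual of a separable normed space is weak-* compact
(Banach–Alaoglu) and metrizable, so by the Hausdorff–Alexandroff theorem it is a continuous
image `φ(Δ)` of the Cantor set. Then `x ↦ (d ↦ φ(d)(x))` maps `X` linearly into `C(Δ)`, and it is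
isometric because `‖x‖ = sup_{f ∈ B} |f x|` by Hahn–Banach.
-/

open Metric

namespace WeakDual

section Eval

variable {𝕜 E K : Type*} [RCLike 𝕜] [SeminormedAddCommGroup E] [NormedSpace 𝕜 E]
  [TopologicalSpace K]

noncomputable def evalContinuousMap (φ : C(K, WeakDual 𝕜 E)) : E →ₗ[𝕜] C(K, 𝕜) where
  toFun x := ⟨fun k => φ k x, (eval_continuous x).comp φ.continuous⟩
  map_add' x y := by ext k; exact map_add (φ k) x y
  map_smul' c x := by ext k; exact map_smul (φ k) c x

@[simp]
theorem evalContinuousMap_apply (φ : C(K, WeakDual 𝕜 E)) (x : E) (k : K) :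
    evalContinuousMap φ x k = φ k x :=
  rfl

theorem norm_evalContinuousMap [CompactSpace K] {φ : C(K, WeakDual 𝕜 E)}
    (hφ : Set.range φ = toStrongDual ⁻¹' closedBall 0 1) (x : E) :
    ‖evalContinuousMap φ x‖ = ‖x‖ := by
  apply le_antisymm
  · refine (ContinuousMap.norm_le _ (norm_nonneg x)).2 fun k => ?_
    have hk : ‖toStrongDual (φ k)‖ ≤ 1 := by
      simpa using (hφ ▸ Set.mem_range_self k : φ k ∈ toStrongDual ⁻¹' closedBall 0 1)
    simpa using (toStrongDual (φ k)).le_of_opNorm_le hk x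
  · obtain ⟨g, hg, hgx⟩ := exists_dual_vector'' 𝕜 x
    obtain ⟨k, hk⟩ : StrongDual.toWeakDual g ∈ Set.range φ := by
      rw [hφ]; simpa using hg
    calc ‖x‖ = ‖evalContinuousMap φ x k‖ := by simp [hk, hgx]
      _ ≤ ‖evalContinuousMap φ x‖ := ContinuousMap.norm_coe_le_norm _ k

end Eval

theorem exists_nat_bool_continuousMap_range_eq_of_isCompact {𝕜 E : Type*}
    [NontriviallyNormedField 𝕜] [SeminormedAddCommGroup E] [NormedSpace 𝕜 E] [TopologicalSpace.SeparableSpace E]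
    {K : Set (WeakDual 𝕜 E)} (hK : IsCompact K) (hne : K.Nonempty) :
    ∃ φ : C(ℕ → Bool, WeakDual 𝕜 E), Set.range φ = K := by
  have : CompactSpace K := isCompact_iff_compactSpace.mp hK
  have : Nonempty K := hne.to_subtype
  have := metrizable_of_isCompact 𝕜 E K hK
  let _ := TopologicalSpace.metrizableSpaceMetric K
  obtain ⟨f, hf, hsurj⟩ := exists_nat_bool_continuous_surjective_of_compact K
  exact ⟨⟨Subtype.val ∘ f, continuous_subtype_val.comp hf⟩, by
    simp [Set.range_comp, hsurj.range_eq]⟩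

end WeakDual

open WeakDual in
theorem banach_mazur_general
    {X : Type*} [NormedAddCommGroup X] [NormedSpace ℝ X]
    [TopologicalSpace.SeparableSpace X] :
    ∃ T : X →ₗ[ℝ] C((ℕ → Bool), ℝ), ∀ x : X, ‖T x‖ = ‖x‖ := by
  obtain ⟨φ, hφ⟩ := exists_nat_bool_continuousMap_range_eq_of_isCompact
    (isCompact_closedBall (0 : StrongDual ℝ X) 1) ⟨0, by simp⟩
  exact ⟨evalContinuousMap φ, norm_evalContinuousMap hφ⟩

/-- **Banach–Mazur theorem.** Every separable real Banach space embeds linearly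
isometrically into `C(Δ)`, the space of continuous real-valued functions on the Cantor
set `Δ = {0,1}^ℕ` with the supremum norm. -/
theorem banach_mazur
    {X : Type*} [NormedAddCommGroup X] [NormedSpace ℝ X] [CompleteSpace X]
    [TopologicalSpace.SeparableSpace X] :
    ∃ T : X →ₗ[ℝ] C((ℕ → Bool), ℝ), ∀ x : X, ‖T x‖ = ‖x‖ :=
  banach_mazur_general
end
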